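/- Let S be a left-handed skew Boolean algebra freely generated by an infinite set X. Then S has no atoms. -/
import Mathlib


universe u

/-- A skew Boolean algebra. -/
class SBA (S : Type u) where
  wedge : S → S → S
  vee : S → S → S
  diff : S → S → S
  zero : S
  wedge_assoc : ∀ x y z : S, wedge (wedge x y) z = wedge x (wedge y z)
  vee_assoc : ∀ x y z : S, vee (vee x y) z = vee x (vee y z)
  absorb1 : ∀ x y : S, wedge x (vee x y) = x
  absorb2 : ∀ x y : S, wedge (vee y x) x = x
  absorb3 : ∀ x y : S, vee x (wedge x y) = x
  absorb4 : ∀ x y : S, vee (wedge y x) x = x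
  sdistrib1 : ∀ x y z : S, wedge x (vee y z) = vee (wedge x y) (wedge x z)
  sdistrib2 : ∀ x y z : S, wedge (vee x y) z = vee (wedge x z) (wedge y z)
  zero_wedge : ∀ x : S, wedge zero x = zero
  wedge_zero : ∀ x : S, wedge x zero = zero
  zero_vee : ∀ x : S, vee zero x = x
  vee_zero : ∀ x : S, vee x zero = x
  diff_ax1 : ∀ x y : S, vee (wedge (wedge x y) x) (diff x y) = x
  diff_ax2 : ∀ x y : S, wedge (wedge (wedge x y) x) (diff x y) = zero
  diff_ax3 : ∀ x y : S, wedge (diff x y) (wedge (wedge x y) x) = zero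

namespace SBA

scoped infixl:70 " ⋏ " => SBA.wedge
scoped infixl:65 " ⋎ " => SBA.vee
scoped infixl:70 " ∖ " => SBA.diff

variable {S : Type u} [SBA S]

/-- Green's relation `D`: `x D y` iff `x⋏y⋏x = x` and `y⋏x⋏y = y`. -/
def Drel (x y : S) : Prop := x ⋏ y ⋏ x = x ∧ y ⋏ x ⋏ y = y

/-- The natural partial order: `x ≤ y` iff `x⋏y = x = y⋏x`. -/
def nle (x y : S) : Prop := x ⋏ y = x ∧ y ⋏ x = x

/-- An atom: a nonzero element with nothing strictly between it and `0`. -/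
def IsAtom (a : S) : Prop := a ≠ zero ∧ ∀ x : S, nle x a → x = zero ∨ x = a

/-- `X` generates `S`: the only subset of `S` containing `X` and `0` and closed
under the three operations is `S` itself. -/
def Generates (X : Set S) : Prop :=
  ∀ T : Set S, X ⊆ T → zero ∈ T →
    (∀ a b : S, a ∈ T → b ∈ T → a ⋏ b ∈ T ∧ a ⋎ b ∈ T ∧ a ∖ b ∈ T) →
    T = Set.univ

/-- A homomorphism of skew Boolean algebras. -/
def IsHom {T : Type u} [SBA T] (f : S → T) : Prop :=
  (∀ a b : S, f (a ⋏ b) = f a ⋏ f b) ∧ (∀ a b : S, f (a ⋎ b) = f a ⋎ f b) ∧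
    (∀ a b : S, f (a ∖ b) = f a ∖ f b) ∧ f zero = zero

end SBA

open SBA

/-- A left-handed skew Boolean algebra. -/
class LeftHanded (S : Type u) [SBA S] : Prop where
  lh_wedge : ∀ x y : S, x ⋏ y ⋏ x = x ⋏ y
  lh_vee : ∀ x y : S, x ⋎ y ⋎ x = y ⋎ x

/-- `S` is freely generated by `X` over the variety of all skew Boolean algebras. -/
def FreelyGenerates (S : Type u) [SBA S] (X : Set S) : Prop :=
  Generates X ∧
    ∀ (T : Type u) [SBA T], ∀ g : X → T,
      ∃ f : S → T, IsHom f ∧ ∀ x : X, f x = g x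

/-- `S` is freely generated by `X` over the variety of left-handed skew Boolean algebras. -/
def LFreelyGenerates (S : Type u) [SBA S] [LeftHanded S] (X : Set S) : Prop :=
  Generates X ∧
    ∀ (T : Type u) [SBA T] [LeftHanded T], ∀ g : X → T,
      ∃ f : S → T, IsHom f ∧ ∀ x : X, f x = g x


namespace SBAProof

open SBA

variable {S : Type u} [SBA S]

lemma widem (x : S) : x ⋏ x = x := by
  calc x ⋏ x = x ⋏ (x ⋎ x ⋏ x) := by rw [SBA.absorb3]
    _ = x := SBA.absorb1 _ _

lemma diff_wedge (a y : S) : (a ∖ y) ⋏ a = a ∖ y := by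
  calc (a ∖ y) ⋏ a = (a ∖ y) ⋏ (a ⋏ y ⋏ a ⋎ a ∖ y) := by rw [SBA.diff_ax1]
    _ = (a ∖ y) ⋏ (a ⋏ y ⋏ a) ⋎ (a ∖ y) ⋏ (a ∖ y) := SBA.sdistrib1 _ _ _
    _ = SBA.zero ⋎ a ∖ y := by rw [SBA.diff_ax3, widem]
    _ = a ∖ y := SBA.zero_vee _

lemma wedge_diff (a y : S) : a ⋏ (a ∖ y) = a ∖ y := by
  calc a ⋏ (a ∖ y) = (a ⋏ y ⋏ a ⋎ a ∖ y) ⋏ (a ∖ y) := by rw [SBA.diff_ax1]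
    _ = (a ⋏ y ⋏ a) ⋏ (a ∖ y) ⋎ (a ∖ y) ⋏ (a ∖ y) := SBA.sdistrib2 _ _ _
    _ = SBA.zero ⋎ a ∖ y := by rw [SBA.diff_ax2, widem]
    _ = a ∖ y := SBA.zero_vee _

lemma diff_self (a : S) : a ∖ a = SBA.zero := by
  have h := SBA.diff_ax3 a a
  rw [widem, widem] at h
  rw [← diff_wedge a a, h]

lemma wedge_le [LeftHanded S] (a y : S) : nle (a ⋏ y) a := by
  constructor
  · exact LeftHanded.lh_wedge a y
  · rw [← SBA.wedge_assoc, widem]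

lemma diff_le (a y : S) : nle (a ∖ y) a := ⟨diff_wedge a y, wedge_diff a y⟩

lemma decomp [LeftHanded S] (a y : S) : a ⋏ y ⋎ a ∖ y = a := by
  have h := SBA.diff_ax1 a y
  rwa [LeftHanded.lh_wedge] at h

inductive Gen (F : Set S) : S → Prop
  | of {x : S} : x ∈ F → Gen F x
  | zero : Gen F SBA.zero
  | wedge {a b : S} : Gen F a → Gen F b → Gen F (a ⋏ b)
  | vee {a b : S} : Gen F a → Gen F b → Gen F (a ⋎ b)
  | diff {a b : S} : Gen F a → Gen F b → Gen F (a ∖ b)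

lemma Gen.mono {F G : Set S} (h : F ⊆ G) {a : S} (ha : Gen F a) : Gen G a := by
  induction ha with
  | of hx => exact Gen.of (h hx)
  | zero => exact Gen.zero
  | wedge _ _ ih1 ih2 => exact Gen.wedge ih1 ih2
  | vee _ _ ih1 ih2 => exact Gen.vee ih1 ih2
  | diff _ _ ih1 ih2 => exact Gen.diff ih1 ih2

lemma exists_finset {X : Set S} (hgen : Generates X) (a : S) :
    ∃ F : Finset S, ↑F ⊆ X ∧ Gen (↑F : Set S) a := by
  classical
  have h := hgen {s | ∃ F : Finset S, ↑F ⊆ X ∧ Gen (↑F : Set S) s}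
    (fun x hx => ⟨{x}, by simpa using hx, Gen.of (by simp)⟩)
    ⟨∅, by simp, Gen.zero⟩
    (by
      rintro a b ⟨Fa, hFa, ha⟩ ⟨Fb, hFb, hb⟩
      have hsub : (↑(Fa ∪ Fb) : Set S) ⊆ X := by
        rw [Finset.coe_union]; exact Set.union_subset hFa hFb
      have ha' : Gen (↑(Fa ∪ Fb) : Set S) a :=
        ha.mono (by rw [Finset.coe_union]; exact Set.subset_union_left)
      have hb' : Gen (↑(Fa ∪ Fb) : Set S) b :=
        hb.mono (by rw [Finset.coe_union]; exact Set.subset_union_right)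
      exact ⟨⟨_, hsub, ha'.wedge hb'⟩, ⟨_, hsub, ha'.vee hb'⟩, ⟨_, hsub, ha'.diff hb'⟩⟩)
  have : a ∈ (Set.univ : Set S) := trivial
  rw [← h] at this
  exact this

lemma hom_fix {f : S → S} (hf : IsHom f) {F : Set S} (hfix : ∀ x ∈ F, f x = x)
    {a : S} (ha : Gen F a) : f a = a := by
  induction ha with
  | of hx => exact hfix _ hx
  | zero => exact hf.2.2.2
  | wedge _ _ ih1 ih2 => rw [hf.1, ih1, ih2]
  | vee _ _ ih1 ih2 => rw [hf.2.1, ih1, ih2]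
  | diff _ _ ih1 ih2 => rw [hf.2.2.1, ih1, ih2]

end SBAProof

open SBAProof in
theorem stmt15 (S : Type u) [SBA S] [LeftHanded S] (X : Set S) (hX : X.Infinite)
    (hfree : LFreelyGenerates S X) : ∀ a : S, ¬ SBA.IsAtom a := by
  classical
  rintro a ⟨hane, hatom⟩
  obtain ⟨F, hFX, hFa⟩ := exists_finset hfree.1 a
  obtain ⟨y, hy⟩ := (hX.diff F.finite_toSet).nonempty
  have key : ∀ c : S, ∃ f : S → S, IsHom f ∧ f a = a ∧ f y = c := by
    intro c
    obtain ⟨f, hf, hfg⟩ := hfree.2 S (fun x : X => if (x : S) = y then c else (x : S))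
    refine ⟨f, hf, ?_, ?_⟩
    · refine hom_fix hf (fun x hx => ?_) hFa
      have hxX : x ∈ X := hFX hx
      have h := hfg ⟨x, hxX⟩
      simpa [show x ≠ y from fun h' => hy.2 (h' ▸ hx)] using h
    · have h := hfg ⟨y, hy.1⟩
      simpa using h
  rcases hatom (a ⋏ y) (wedge_le a y) with h | h
  · have hd : a ∖ y = a := by
      have hdec := decomp a y
      rwa [h, SBA.zero_vee] at hdec
    obtain ⟨f, hf, hfa, hfy⟩ := key a
    have hz : f (a ∖ y) = a ∖ a := by rw [hf.2.2.1, hfa, hfy]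
    rw [hd, hfa, diff_self] at hz
    exact hane hz
  · obtain ⟨f, hf, hfa, hfy⟩ := key SBA.zero
    have hz : f (a ⋏ y) = a ⋏ SBA.zero := by rw [hf.1, hfa, hfy]
    rw [h, hfa, SBA.wedge_zero] at hz
    exact hane hz
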